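/- arXiv:1605.03155 — 6 statements merged into one kernel-verified Lean document; each statement's English description precedes it below -/
import Mathlib

section
/- The discrete D-convex envelope scheme is degenerate elliptic: with the grid setup below, for any two grid functions u, w : G^h → ℝ and any grid point x, if u(x) ≤ w(x) and u(x) − u(y) ≤ w(x) − w(y) for all y ∈ G^h, then F^{W,h}[u](x) ≤ F^{W,h}[w](x). The same monotonicity holds for the operator −λ^h. -/
open Matrix

/-- The centred second difference in the grid direction `v`:
`D^h_vv u(x) = (u(x+hv) − 2u(x) + u(x−hv))/(h²|v|²)`. -/
noncomputable def Dvv {n : ℕ} (h : ℝ) (u : (Fin n → ℝ) → ℝ)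
    (x v : Fin n → ℝ) : ℝ :=
  (u (x + h • v) - 2 * u x + u (x - h • v)) / (h ^ 2 * (v ⬝ᵥ v))

/-- `λ^h[u](x) = min_{v ∈ D^W} D^h_vv u(x)`. -/
noncomputable def lamh {n : ℕ} (h : ℝ) (DW : Finset (Fin n → ℝ))
    (hDWne : DW.Nonempty) (u : (Fin n → ℝ) → ℝ) (x : Fin n → ℝ) : ℝ :=
  DW.inf' hDWne (fun v => Dvv h u x v)

open Classical in
/-- The full discrete scheme: `F^{W,h}[u](x) = max{u(x) − g(x), −λ^h[u](x)}` at
interior points, and `u(x) − g(x)` at boundary points. -/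
noncomputable def Fh {n : ℕ} (h : ℝ) (g : (Fin n → ℝ) → ℝ)
    (GhV : Finset (Fin n → ℝ)) (DW : Finset (Fin n → ℝ)) (hDWne : DW.Nonempty)
    (u : (Fin n → ℝ) → ℝ) (x : Fin n → ℝ) : ℝ :=
  if x ∈ GhV then max (u x - g x) (-(lamh h DW hDWne u x)) else u x - g x

/-- The discrete `D`-convex envelope scheme is degenerate elliptic, and so is
the operator `−λ^h`. -/
theorem Fh_degenerate_elliptic {n : ℕ} (hn : 1 ≤ n) (h : ℝ) (hh : 0 < h)
    (Gh GhV Gb : Finset (Fin n → ℝ))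
    (hpart : GhV ∪ Gb = Gh) (hdisj : Disjoint GhV Gb)
    (hgrid : ∀ x ∈ Gh, ∃ z : Fin n → ℤ, ∀ i, x i = h * (z i : ℝ))
    (g : (Fin n → ℝ) → ℝ)
    (DW : Finset (Fin n → ℝ)) (hDWne : DW.Nonempty)
    (hDWsym : ∀ v ∈ DW, -v ∈ DW) (hDW0 : (0 : Fin n → ℝ) ∉ DW)
    (hDWint : ∀ v ∈ DW, ∀ i, ∃ z : ℤ, v i = (z : ℝ))
    (hnbr : ∀ x ∈ GhV, ∀ v ∈ DW, x + h • v ∈ Gh ∧ x - h • v ∈ Gh) :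
    (∀ u w : (Fin n → ℝ) → ℝ, ∀ x ∈ Gh, u x ≤ w x →
      (∀ y ∈ Gh, u x - u y ≤ w x - w y) →
      Fh h g GhV DW hDWne u x ≤ Fh h g GhV DW hDWne w x) ∧
    (∀ u w : (Fin n → ℝ) → ℝ, ∀ x ∈ GhV, u x ≤ w x →
      (∀ y ∈ Gh, u x - u y ≤ w x - w y) →
      -(lamh h DW hDWne u x) ≤ -(lamh h DW hDWne w x)) := by

  have key : ∀ u w : (Fin n → ℝ) → ℝ, ∀ x ∈ GhV, u x ≤ w x →
      (∀ y ∈ Gh, u x - u y ≤ w x - w y) →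
      -(lamh h DW hDWne u x) ≤ -(lamh h DW hDWne w x) := by
    intro u w x hx hxu hxy
    have : lamh h DW hDWne w x ≤ lamh h DW hDWne u x := by
      apply Finset.le_inf'
      intro v hv
      refine (Finset.inf'_le _ hv : _ ≤ Dvv h w x v).trans ?_
      have hvne : v ≠ 0 := fun hv0 => hDW0 (hv0 ▸ hv)
      have hvv : (0:ℝ) < v ⬝ᵥ v := by
        have := dotProduct_self_eq_zero (v := v)
        have hnn : (0:ℝ) ≤ v ⬝ᵥ v := Finset.sum_nonneg fun i _ => mul_self_nonneg (v i)
        rcases hnn.lt_or_eq with h1 | h1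
        · exact h1
        · exact absurd (this.mp h1.symm) hvne
      have hden : (0:ℝ) < h ^ 2 * (v ⬝ᵥ v) := by positivity
      unfold Dvv
      apply div_le_div_of_nonneg_right ?_ hden.le
      have h1 := hxy _ ((hnbr x hx v hv).1)
      have h2 := hxy _ ((hnbr x hx v hv).2)
      linarith
    linarith
  refine ⟨?_, key⟩
  intro u w x hx hxu hxy
  unfold Fh
  by_cases hxv : x ∈ GhV
  · simp only [hxv, if_true]
    exact max_le_max (by linarith) (key u w x hxv hxu hxy)
  · simp only [hxv, if_false]
    linarith
end

section
/- Discrete comparison principle for strict subsolutions. Let F^h be an elliptic finite difference scheme on a finite grid G, and let u, v : G → ℝ be grid functions such that for some ε > 0, F^h[u](x) + ε ≤ F^h[v](x) for all x ∈ G. Then u ≤ v on G. -/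
/-- Discrete comparison principle for strict subsolutions: if `F^h` is an elliptic
finite difference scheme on a finite grid `G` and `F^h[u](x) + ε ≤ F^h[v](x)` for
all `x` and some `ε > 0`, then `u ≤ v` on `G`. -/
theorem discrete_comparison_strict {G : Type*} [Fintype G]
    (Φ : G → ℝ → (G → ℝ) → ℝ)
    (hell : ∀ (x : G) (r s : ℝ) (p q : G → ℝ),
      r ≤ s → (∀ y, p y ≤ q y) → Φ x r p ≤ Φ x s q)
    (u v : G → ℝ) (ε : ℝ) (hε : 0 < ε)
    (hcomp : ∀ x : G,
      Φ x (u x) (fun y => u x - u y) + ε ≤ Φ x (v x) (fun y => v x - v y)) :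
    ∀ x : G, u x ≤ v x := by
  intro x
  by_contra hx
  push_neg at hx
  have hne : Nonempty G := ⟨x⟩
  obtain ⟨x₀, -, hmax⟩ := Finset.exists_max_image (Finset.univ : Finset G)
    (fun z => u z - v z) ⟨x, Finset.mem_univ x⟩
  have hx₀ : v x₀ ≤ u x₀ := by
    have := hmax x (Finset.mem_univ x); linarith
  have h2 : Φ x₀ (v x₀) (fun y => v x₀ - v y) ≤ Φ x₀ (u x₀) (fun y => u x₀ - u y) := by
    apply hell _ _ _ _ _ hx₀
    intro y
    have := hmax y (Finset.mem_univ y)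
    linarith
  have := hcomp x₀
  linarith
end

section
/- Discrete comparison principle for the D-convex envelope scheme. With the grid setup below, if u, v : G^h → ℝ satisfy F^{W,h}[u](x) ≤ F^{W,h}[v](x) for all x ∈ G^h, then u ≤ v on G^h. In particular, solutions of F^{W,h}[u] = 0 on G^h are unique. -/
open Matrix

private lemma dot_self_pos' {n : ℕ} {w : Fin n → ℝ} (hw : w ≠ 0) : 0 < w ⬝ᵥ w := by
  have h1 : 0 ≤ w ⬝ᵥ w := Finset.sum_nonneg fun i _ => mul_self_nonneg _
  rcases h1.lt_or_eq with hlt | heq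
  · exact hlt
  · exact absurd (dotProduct_self_eq_zero.mp heq.symm) hw

private lemma comp_aux' {n : ℕ} (h : ℝ) (hh : 0 < h)
    (Gh GhV : Finset (Fin n → ℝ))
    (g : (Fin n → ℝ) → ℝ)
    (DW : Finset (Fin n → ℝ)) (hDWne : DW.Nonempty)
    (hDW0 : (0 : Fin n → ℝ) ∉ DW)
    (hnbr : ∀ x ∈ GhV, ∀ v ∈ DW, x + h • v ∈ Gh ∧ x - h • v ∈ Gh)
    (u v : (Fin n → ℝ) → ℝ)
    (hle : ∀ x ∈ Gh, Fh h g GhV DW hDWne u x ≤ Fh h g GhV DW hDWne v x) :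
    ∀ x ∈ Gh, u x ≤ v x := by
  intro x0 hx0
  by_contra hcon
  push_neg at hcon
  have hne : Gh.Nonempty := ⟨x0, hx0⟩
  set φ : (Fin n → ℝ) → ℝ := fun x => u x - v x with hφ
  set M := Gh.sup' hne φ with hM
  have hMpos : 0 < M := by
    have h1 : φ x0 ≤ M := Finset.le_sup' φ hx0
    have h2 : 0 < φ x0 := by simp only [hφ]; linarith
    linarith
  set S := Gh.filter (fun x => φ x = M) with hS
  have hSne : S.Nonempty := by
    obtain ⟨y, hy, hy2⟩ := Finset.exists_mem_eq_sup' hne φ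
    exact ⟨y, Finset.mem_filter.mpr ⟨hy, hy2.symm⟩⟩
  obtain ⟨y, hyS, hyN⟩ := Finset.exists_mem_eq_sup' hSne (fun x => x ⬝ᵥ x)
  have hyGh : y ∈ Gh := (Finset.mem_filter.mp hyS).1
  have hyM : φ y = M := (Finset.mem_filter.mp hyS).2
  have hbound : ∀ x ∈ Gh, φ x ≤ M := fun x hx => Finset.le_sup' φ hx
  have huvy : v y < u y := by
    have : 0 < φ y := hyM ▸ hMpos
    simp only [hφ] at this; linarith
  have hF := hle y hyGh
  by_cases hyV : y ∈ GhV
  · rw [Fh, Fh, if_pos hyV, if_pos hyV] at hF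
    by_cases hA : -(lamh h DW hDWne v y) ≤ v y - g y
    · have h1 : u y - g y ≤ v y - g y :=
        le_trans (le_max_left _ _) (hF.trans (max_le le_rfl hA))
      linarith
    · push_neg at hA
      have hFv : max (v y - g y) (-(lamh h DW hDWne v y)) = -(lamh h DW hDWne v y) :=
        max_eq_right hA.le
      have h1 : lamh h DW hDWne v y ≤ lamh h DW hDWne u y := by
        have := le_trans (le_max_right _ _) (hF.trans (le_of_eq hFv))
        linarith
      obtain ⟨w, hwDW, hw⟩ := Finset.exists_mem_eq_inf' hDWne (fun w => Dvv h v y w)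
      have h2 : Dvv h v y w ≤ Dvv h u y w := by
        calc Dvv h v y w = lamh h DW hDWne v y := hw.symm
          _ ≤ lamh h DW hDWne u y := h1
          _ ≤ Dvv h u y w := Finset.inf'_le _ hwDW
      have hwne : w ≠ 0 := fun hc => hDW0 (hc ▸ hwDW)
      have hdpos : 0 < h ^ 2 * (w ⬝ᵥ w) := mul_pos (by positivity) (dot_self_pos' hwne)
      obtain ⟨hp, hm⟩ := hnbr y hyV w hwDW
      have hφp : φ (y + h • w) ≤ M := hbound _ hp
      have hφm : φ (y - h • w) ≤ M := hbound _ hm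
      have h3 : v (y + h • w) - 2 * v y + v (y - h • w) ≤
          u (y + h • w) - 2 * u y + u (y - h • w) := by
        rw [Dvv, Dvv, div_le_div_iff_of_pos_right hdpos] at h2
        exact h2
      have ep : φ (y + h • w) = u (y + h • w) - v (y + h • w) := rfl
      have em : φ (y - h • w) = u (y - h • w) - v (y - h • w) := rfl
      have ey : φ y = u y - v y := rfl
      have hpM : φ (y + h • w) = M := by linarith [hyM]
      have hmM : φ (y - h • w) = M := by linarith [hyM]
      have hpS : y + h • w ∈ S := Finset.mem_filter.mpr ⟨hp, hpM⟩
      have hmS : y - h • w ∈ S := Finset.mem_filter.mpr ⟨hm, hmM⟩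
      have hNp : (y + h • w) ⬝ᵥ (y + h • w) ≤ y ⬝ᵥ y := by
        have := Finset.le_sup' (fun x => x ⬝ᵥ x) hpS
        rw [← hyN]; exact this
      have hNm : (y - h • w) ⬝ᵥ (y - h • w) ≤ y ⬝ᵥ y := by
        have := Finset.le_sup' (fun x => x ⬝ᵥ x) hmS
        rw [← hyN]; exact this
      have key : (y + h • w) ⬝ᵥ (y + h • w) + (y - h • w) ⬝ᵥ (y - h • w)
          = 2 * (y ⬝ᵥ y) + 2 * (h ^ 2 * (w ⬝ᵥ w)) := by
        simp only [dotProduct, Pi.add_apply, Pi.sub_apply, Pi.smul_apply, smul_eq_mul,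
          Finset.mul_sum, ← Finset.sum_add_distrib]
        apply Finset.sum_congr rfl
        intro i _
        ring
      linarith
  · rw [Fh, Fh, if_neg hyV, if_neg hyV] at hF
    linarith

/-- Discrete comparison principle for the `D`-convex envelope scheme:
`F^{W,h}[u] ≤ F^{W,h}[v]` on the grid implies `u ≤ v` on the grid. In particular
solutions of `F^{W,h}[u] = 0` are unique. -/
theorem Fh_comparison {n : ℕ} (hn : 1 ≤ n) (h : ℝ) (hh : 0 < h)
    (Gh GhV Gb : Finset (Fin n → ℝ))
    (hpart : GhV ∪ Gb = Gh) (hdisj : Disjoint GhV Gb)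
    (hgrid : ∀ x ∈ Gh, ∃ z : Fin n → ℤ, ∀ i, x i = h * (z i : ℝ))
    (g : (Fin n → ℝ) → ℝ)
    (DW : Finset (Fin n → ℝ)) (hDWne : DW.Nonempty)
    (hDWsym : ∀ v ∈ DW, -v ∈ DW) (hDW0 : (0 : Fin n → ℝ) ∉ DW)
    (hDWint : ∀ v ∈ DW, ∀ i, ∃ z : ℤ, v i = (z : ℝ))
    (hnbr : ∀ x ∈ GhV, ∀ v ∈ DW, x + h • v ∈ Gh ∧ x - h • v ∈ Gh) :
    (∀ u v : (Fin n → ℝ) → ℝ,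
      (∀ x ∈ Gh, Fh h g GhV DW hDWne u x ≤ Fh h g GhV DW hDWne v x) →
      ∀ x ∈ Gh, u x ≤ v x) ∧
    (∀ u v : (Fin n → ℝ) → ℝ,
      (∀ x ∈ Gh, Fh h g GhV DW hDWne u x = 0) →
      (∀ x ∈ Gh, Fh h g GhV DW hDWne v x = 0) →
      ∀ x ∈ Gh, u x = v x) := by
  constructor
  · intro u v hle
    exact comp_aux' h hh Gh GhV g DW hDWne hDW0 hnbr u v hle
  · intro u v hu hv x hx
    have h1 : ∀ y ∈ Gh, Fh h g GhV DW hDWne u y ≤ Fh h g GhV DW hDWne v y :=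
      fun y hy => by rw [hu y hy, hv y hy]
    have h2 : ∀ y ∈ Gh, Fh h g GhV DW hDWne v y ≤ Fh h g GhV DW hDWne u y :=
      fun y hy => by rw [hu y hy, hv y hy]
    exact le_antisymm (comp_aux' h hh Gh GhV g DW hDWne hDW0 hnbr u v h1 x hx)
      (comp_aux' h hh Gh GhV g DW hDWne hDW0 hnbr v u h2 x hx)
end

section
/- With the grid setup below, any grid function u^h : G^h → ℝ satisfying F^{W,h}[u^h](x) = 0 for all x ∈ G^h is bounded independently of h by the data: min_{y ∈ G^h} g(y) ≤ u^h(x) ≤ max_{y ∈ G^h} g(y) for all x ∈ G^h. -/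
open Matrix

/-- Any solution of the discrete scheme `F^{W,h}[u] = 0` is bounded by the data:
`min_G g ≤ u ≤ max_G g` on the grid. -/
theorem Fh_solution_bounds {n : ℕ} (hn : 1 ≤ n) (h : ℝ) (hh : 0 < h)
    (Gh GhV Gb : Finset (Fin n → ℝ))
    (hpart : GhV ∪ Gb = Gh) (hdisj : Disjoint GhV Gb)
    (hgrid : ∀ x ∈ Gh, ∃ z : Fin n → ℤ, ∀ i, x i = h * (z i : ℝ))
    (g : (Fin n → ℝ) → ℝ)
    (DW : Finset (Fin n → ℝ)) (hDWne : DW.Nonempty)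
    (hDWsym : ∀ v ∈ DW, -v ∈ DW) (hDW0 : (0 : Fin n → ℝ) ∉ DW)
    (hDWint : ∀ v ∈ DW, ∀ i, ∃ z : ℤ, v i = (z : ℝ))
    (hnbr : ∀ x ∈ GhV, ∀ v ∈ DW, x + h • v ∈ Gh ∧ x - h • v ∈ Gh)
    (u : (Fin n → ℝ) → ℝ)
    (hsol : ∀ x ∈ Gh, Fh h g GhV DW hDWne u x = 0) :
    ∀ x, ∀ hx : x ∈ Gh,
      Gh.inf' ⟨x, hx⟩ g ≤ u x ∧ u x ≤ Gh.sup' ⟨x, hx⟩ g := by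

  have hub : ∀ y ∈ Gh, u y ≤ g y := by
    intro y hy
    have hs := hsol y hy
    unfold Fh at hs
    split_ifs at hs with hyV
    · have := le_max_left (u y - g y) (-(lamh h DW hDWne u y))
      rw [hs] at this; linarith
    · linarith
  intro x hx
  refine ⟨?_, le_trans (hub x hx) (Finset.le_sup' g hx)⟩
  have hne : Gh.Nonempty := ⟨x, hx⟩
  set m := Gh.inf' hne u with hm
  set f : (Fin n → ℝ) → ℝ := fun y => ∑ i, (y i)^2 with hf
  set S := Gh.filter (fun y => u y = m) with hS
  obtain ⟨x₀, hx₀G, hx₀⟩ := Finset.exists_mem_eq_inf' hne u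
  have hSne : S.Nonempty := ⟨x₀, Finset.mem_filter.2 ⟨hx₀G, hx₀.symm⟩⟩
  obtain ⟨y, hyS, hymax⟩ := S.exists_max_image f hSne
  have hyG : y ∈ Gh := (Finset.mem_filter.1 hyS).1
  have hym : u y = m := (Finset.mem_filter.1 hyS).2
  have key : u y = g y := by
    have hs := hsol y hyG
    unfold Fh at hs
    split_ifs at hs with hyV
    · by_contra hne'
      have hle : u y - g y ≤ 0 := by
        have := le_max_left (u y - g y) (-(lamh h DW hDWne u y))
        rw [hs] at this; linarith
      have h1 : u y - g y < 0 := lt_of_le_of_ne hle (sub_ne_zero.2 hne')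
      have h2 : lamh h DW hDWne u y = 0 := by
        rcases max_choice (u y - g y) (-(lamh h DW hDWne u y)) with hc | hc <;>
          rw [hc] at hs <;> linarith
      obtain ⟨v, hvDW, hveq⟩ := Finset.exists_mem_eq_inf' hDWne (fun v => Dvv h u y v)
      have hDv0 : Dvv h u y v = 0 := by
        have : lamh h DW hDWne u y = Dvv h u y v := hveq
        rw [h2] at this; exact this.symm
      have hv0 : v ≠ 0 := fun hv => hDW0 (hv ▸ hvDW)
      have hfv : 0 < f v := by
        obtain ⟨i, hi⟩ := Function.ne_iff.1 hv0
        refine Finset.sum_pos' (fun j _ => sq_nonneg _) ⟨i, Finset.mem_univ i, ?_⟩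
        exact (sq_nonneg _).lt_of_ne (Ne.symm (pow_ne_zero 2 hi))
      have hvv : (0:ℝ) < v ⬝ᵥ v := by
        have : v ⬝ᵥ v = f v := by
          simp [dotProduct, hf, sq]
        rw [this]; exact hfv
      have hden : h ^ 2 * (v ⬝ᵥ v) ≠ 0 := by positivity
      have hnum : u (y + h • v) - 2 * u y + u (y - h • v) = 0 := by
        have := hDv0
        unfold Dvv at this
        exact (div_eq_zero_iff.1 this).resolve_right hden
      obtain ⟨hp, hmn⟩ := hnbr y hyV v hvDW
      have h3 : m ≤ u (y + h • v) := Finset.inf'_le u hp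
      have h4 : m ≤ u (y - h • v) := Finset.inf'_le u hmn
      have h5 : u (y + h • v) = m := by linarith
      have h6 : u (y - h • v) = m := by linarith
      have hpS : y + h • v ∈ S := Finset.mem_filter.2 ⟨hp, h5⟩
      have hmS : y - h • v ∈ S := Finset.mem_filter.2 ⟨hmn, h6⟩
      have hsum : f (y + h • v) + f (y - h • v) = 2 * f y + 2 * h ^ 2 * f v := by
        simp only [hf, Pi.add_apply, Pi.sub_apply, Pi.smul_apply, smul_eq_mul]
        rw [← Finset.sum_add_distrib, Finset.mul_sum, Finset.mul_sum,
          ← Finset.sum_add_distrib]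
        exact Finset.sum_congr rfl (fun i _ => by ring)
      have hle1 : f (y + h • v) ≤ f y := hymax _ hpS
      have hle2 : f (y - h • v) ≤ f y := hymax _ hmS
      nlinarith [mul_pos (pow_pos hh 2) hfv]
    · linarith
  calc Gh.inf' ⟨x, hx⟩ g ≤ g y := Finset.inf'_le g hyG
    _ = u y := key.symm
    _ = m := hym
    _ ≤ u x := Finset.inf'_le u hx
end

section
/- With the grid setup below, the map T defined by T(u)(x) = min{ g(x), min_{v ∈ D^W} (u(x+hv) + u(x−hv))/2 } for x ∈ G^h_V and T(u)(x) = g(x) for x ∈ ∂G^h has a fixed point; consequently there exists a grid function u : G^h → ℝ with F^{W,h}[u](x) = 0 for all x ∈ G^h. Moreover a fixed point exists in the set K = { u : u = g on ∂G^h and min_{y∈G^h} g(y) ≤ u(x) ≤ g(x) for x ∈ G^h_V }, since T maps the convex compact set K into itself. -/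
open Matrix

open Classical in
/-- The iterative solution map:
`T(u)(x) = min{ g(x), min_{v ∈ D^W} (u(x+hv)+u(x−hv))/2 }` at interior points,
and `T(u)(x) = g(x)` at boundary points. -/
noncomputable def Tmap {n : ℕ} (h : ℝ) (g : (Fin n → ℝ) → ℝ)
    (GhV : Finset (Fin n → ℝ)) (DW : Finset (Fin n → ℝ)) (hDWne : DW.Nonempty)
    (u : (Fin n → ℝ) → ℝ) (x : Fin n → ℝ) : ℝ :=
  if x ∈ GhV then
    min (g x) (DW.inf' hDWne (fun v => (u (x + h • v) + u (x - h • v)) / 2))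
  else g x

open Filter Topology in
private lemma tendsto_finset_inf'_aux {ι : Type*} {s : Finset ι} (hs : s.Nonempty)
    {f : ℕ → ι → ℝ} {F : ι → ℝ} {l : Filter ℕ}
    (h : ∀ i ∈ s, Tendsto (fun k => f k i) l (𝓝 (F i))) :
    Tendsto (fun k => s.inf' hs (f k)) l (𝓝 (s.inf' hs F)) := by
  induction hs using Finset.Nonempty.cons_induction with
  | singleton i => simpa using h i (by simp)
  | cons i s hi hne ih =>
    simp only [Finset.inf'_cons (H := hne)]
    exact (h i (by simp)).min (ih fun j hj => h j (Finset.mem_cons_of_mem hj))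


/-- Existence of solutions of the discrete scheme: the iteration map `T` has a
fixed point in the set `K = { u : u = g on ∂G^h, min_G g ≤ u ≤ g on G^h_V }`,
and consequently there is a grid function solving `F^{W,h}[u] = 0` on the grid. -/
theorem Fh_exists_solution {n : ℕ} (hn : 1 ≤ n) (h : ℝ) (hh : 0 < h)
    (Gh GhV Gb : Finset (Fin n → ℝ)) (hGhne : Gh.Nonempty)
    (hpart : GhV ∪ Gb = Gh) (hdisj : Disjoint GhV Gb)
    (hgrid : ∀ x ∈ Gh, ∃ z : Fin n → ℤ, ∀ i, x i = h * (z i : ℝ))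
    (g : (Fin n → ℝ) → ℝ)
    (DW : Finset (Fin n → ℝ)) (hDWne : DW.Nonempty)
    (hDWsym : ∀ v ∈ DW, -v ∈ DW) (hDW0 : (0 : Fin n → ℝ) ∉ DW)
    (hDWint : ∀ v ∈ DW, ∀ i, ∃ z : ℤ, v i = (z : ℝ))
    (hnbr : ∀ x ∈ GhV, ∀ v ∈ DW, x + h • v ∈ Gh ∧ x - h • v ∈ Gh) :
    ∃ u : (Fin n → ℝ) → ℝ,
      (∀ x ∈ Gb, u x = g x) ∧
      (∀ x ∈ GhV, Gh.inf' hGhne g ≤ u x ∧ u x ≤ g x) ∧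
      (∀ x ∈ Gh, Tmap h g GhV DW hDWne u x = u x) ∧
      (∀ x ∈ Gh, Fh h g GhV DW hDWne u x = 0) := by
  classical
  set T : ((Fin n → ℝ) → ℝ) → ((Fin n → ℝ) → ℝ) := Tmap h g GhV DW hDWne with hT
  set m : ℝ := Gh.inf' hGhne g with hm
  have hGhVsub : GhV ⊆ Gh := hpart ▸ Finset.subset_union_left
  have hGbsub : Gb ⊆ Gh := hpart ▸ Finset.subset_union_right
  -- monotonicity of T
  have hmono : ∀ u v : (Fin n → ℝ) → ℝ, (∀ x, u x ≤ v x) → ∀ x, T u x ≤ T v x := by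
    intro u v huv x
    simp only [hT, Tmap]
    split
    · refine min_le_min le_rfl (Finset.le_inf'_iff _ _ |>.mpr fun w hw => ?_)
      refine le_trans (Finset.inf'_le _ hw) ?_
      gcongr <;> exact huv _
    · exact le_rfl
  -- the iteration sequence
  set U : ℕ → (Fin n → ℝ) → ℝ := fun k => T^[k] g with hU
  have hUsucc : ∀ k, U (k + 1) = T (U k) := fun k => Function.iterate_succ_apply' T k g
  have hstep : ∀ x, T g x ≤ g x := by
    intro x; simp only [hT, Tmap]; split
    · exact min_le_left _ _
    · exact le_rfl
  have hanti : ∀ k x, U (k + 1) x ≤ U k x := by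
    intro k
    induction k with
    | zero => simpa [hU] using hstep
    | succ k ih =>
      intro x
      rw [hUsucc (k+1)]
      calc T (U (k + 1)) x ≤ T (U k) x := hmono _ _ ih x
        _ = U (k + 1) x := by rw [hUsucc k]
  have hlow : ∀ k, ∀ x ∈ Gh, m ≤ U k x := by
    intro k
    induction k with
    | zero => intro x hx; exact Finset.inf'_le _ hx
    | succ k ih =>
      intro x hx
      rw [hUsucc k]
      simp only [hT, Tmap]
      split
      · rename_i hxV
        refine le_min (Finset.inf'_le _ hx) (Finset.le_inf'_iff _ _ |>.mpr fun v hv => ?_)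
        obtain ⟨h1, h2⟩ := hnbr x hxV v hv
        have := ih _ h1
        have := ih _ h2
        linarith
      · exact Finset.inf'_le _ hx
  have hbdd : ∀ x k, min m (g x) ≤ U k x := by
    intro x k
    by_cases hxV : x ∈ GhV
    · exact (min_le_left _ _).trans (hlow k x (hGhVsub hxV))
    · have : U k x = g x := by
        cases k with
        | zero => rfl
        | succ k => rw [hUsucc k]; simp only [hT, Tmap]; rw [if_neg hxV]
      rw [this]; exact min_le_right _ _
  -- the limit
  set u : (Fin n → ℝ) → ℝ := fun x => ⨅ k, U k x with hu
  have htend : ∀ x, Filter.Tendsto (fun k => U k x) Filter.atTop (nhds (u x)) := by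
    intro x
    exact tendsto_atTop_ciInf (antitone_nat_of_succ_le fun k => hanti k x)
      ⟨min m (g x), by rintro y ⟨k, rfl⟩; exact hbdd x k⟩
  have hfix : ∀ x, T u x = u x := by
    intro x
    have h1 : Filter.Tendsto (fun k => U (k + 1) x) Filter.atTop (nhds (u x)) :=
      (htend x).comp (Filter.tendsto_add_atTop_nat 1)
    have h2 : Filter.Tendsto (fun k => T (U k) x) Filter.atTop (nhds (T u x)) := by
      simp only [hT, Tmap]
      split
      · exact Filter.Tendsto.min tendsto_const_nhds
          (tendsto_finset_inf'_aux hDWne fun v hv =>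
            ((htend (x + h • v)).add (htend (x - h • v))).div_const 2)
      · exact tendsto_const_nhds
    have h3 : Filter.Tendsto (fun k => T (U k) x) Filter.atTop (nhds (u x)) := by
      simpa only [← hUsucc] using h1
    exact tendsto_nhds_unique h2 h3
  refine ⟨u, ?_, ?_, ?_, ?_⟩
  · -- boundary values
    intro x hx
    have hxV : x ∉ GhV := Finset.disjoint_right.mp hdisj hx
    have := hfix x
    simp only [hT, Tmap, if_neg hxV] at this
    exact this.symm
  · -- bounds
    intro x hx
    constructor
    · exact le_ciInf fun k => hlow k x (hGhVsub hx)
    · have := hfix x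
      simp only [hT, Tmap, if_pos hx] at this
      rw [← this]
      exact min_le_left _ _
  · -- fixed point
    intro x _
    exact hfix x
  · -- solves the scheme
    intro x hx
    have hx' : x ∈ GhV ∪ Gb := hpart ▸ hx
    rcases Finset.mem_union.mp hx' with hxV | hxB
    · -- interior point
      have hfixx := hfix x
      simp only [hT, Tmap, if_pos hxV] at hfixx
      set I : ℝ := DW.inf' hDWne (fun v => (u (x + h • v) + u (x - h • v)) / 2) with hI
      have hug : u x ≤ g x := hfixx ▸ min_le_left _ _
      have havg : ∀ v ∈ DW, u x ≤ (u (x + h • v) + u (x - h • v)) / 2 := by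
        intro v hv
        exact hfixx ▸ (min_le_right _ _).trans (Finset.inf'_le _ hv)
      have hden : ∀ v ∈ DW, 0 < h ^ 2 * (v ⬝ᵥ v) := by
        intro v hv
        refine mul_pos (by positivity) ?_
        have hnn : 0 ≤ v ⬝ᵥ v := Finset.sum_nonneg fun i _ => mul_self_nonneg _
        refine lt_of_le_of_ne hnn fun h0 => ?_
        have : v = 0 := dotProduct_self_eq_zero.mp h0.symm
        exact hDW0 (this ▸ hv)
      have hDnn : ∀ v ∈ DW, 0 ≤ Dvv h u x v := by
        intro v hv
        have := havg v hv
        unfold Dvv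
        apply div_nonneg _ (hden v hv).le
        linarith
      have hlamnn : 0 ≤ lamh h DW hDWne u x :=
        Finset.le_inf'_iff _ _ |>.mpr hDnn
      simp only [Fh, if_pos hxV]
      rcases le_total (g x) I with hcase | hcase
      · -- u x = g x
        have hux : u x = g x := hfixx ▸ min_eq_left hcase
        rw [hux, sub_self, max_eq_left (by linarith)]
      · -- u x = I
        have hux : u x = I := hfixx ▸ min_eq_right hcase
        obtain ⟨v₀, hv₀, hEq⟩ := Finset.exists_mem_eq_inf' hDWne
          (fun v => (u (x + h • v) + u (x - h • v)) / 2)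
        have hDv₀ : Dvv h u x v₀ = 0 := by
          unfold Dvv
          have : u x = (u (x + h • v₀) + u (x - h • v₀)) / 2 := by
            rw [hux, hI, hEq]
          rw [div_eq_zero_iff]
          left; linarith
        have hlamle : lamh h DW hDWne u x ≤ 0 := hDv₀ ▸ Finset.inf'_le _ hv₀
        have : lamh h DW hDWne u x = 0 := le_antisymm hlamle hlamnn
        rw [this, neg_zero, max_eq_right (by linarith)]
    · -- boundary point
      have hxV : x ∉ GhV := Finset.disjoint_right.mp hdisj hxB
      have := hfix x
      simp only [hT, Tmap, if_neg hxV] at this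
      simp only [Fh, if_neg hxV, ← this, sub_self]
end

section
/- Consistency of directional minimization over a grid direction subset. Let D be a direction set in ℝⁿ and let D^W ⊆ D be a finite subset whose directional resolution dθ = sup_{w ∈ D} min_{v ∈ D^W} angle(w, v) satisfies dθ < π/2. Then for every symmetric n×n matrix M: λ_D(M) ≤ min_{v ∈ D^W} (vᵀ M v)/|v|² ≤ λ_D(M) + 4 · dθ · ‖M‖, where ‖M‖ is the operator norm. -/
/-!
Normalising to unit vectors `a, b`, the difference of Rayleigh quotients of `M` is
`⟪M (b - a), b⟫ + ⟪M a, b - a⟫`, hence at most `2 ‖M‖ ‖a - b‖`, and the chord `‖a - b‖` is at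
most the arc `angle a b`. Every `w ∈ D` has a grid direction within angle `dθ` of it, so the
grid minimum exceeds `λ_D(M)` by at most `2 dθ ‖M‖`; the lower bound holds because `D^W ⊆ D`.
-/

open Matrix

/-- The `D`-convexity operator `λ_D(M) = inf_{v ∈ D} (vᵀ M v)/|v|²`,
valued in the extended reals. -/
noncomputable def lamD {n : ℕ} (D : Set (Fin n → ℝ))
    (M : Matrix (Fin n) (Fin n) ℝ) : EReal :=
  ⨅ v ∈ D, (((v ⬝ᵥ M.mulVec v) / (v ⬝ᵥ v) : ℝ) : EReal)

/-- The Euclidean (ℓ²) operator norm of a matrix. -/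
noncomputable def matOpNorm {n : ℕ} (M : Matrix (Fin n) (Fin n) ℝ) : ℝ :=
  ‖LinearMap.toContinuousLinearMap (Matrix.toEuclideanLin M)‖

/-- The angle between two nonzero vectors. -/
noncomputable def vecAngle {n : ℕ} (w v : Fin n → ℝ) : ℝ :=
  Real.arccos ((w ⬝ᵥ v) / (Real.sqrt (w ⬝ᵥ w) * Real.sqrt (v ⬝ᵥ v)))

open InnerProductGeometry RealInnerProductSpace

section InnerProductSpace

variable {E : Type*} [NormedAddCommGroup E] [InnerProductSpace ℝ E]

theorem InnerProductGeometry.norm_sub_le_angle {x y : E} (hx : ‖x‖ = 1) (hy : ‖y‖ = 1) :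
    ‖x - y‖ ≤ angle x y := by
  have hcos : ‖x - y‖ * ‖x - y‖ = 2 - 2 * Real.cos (angle x y) := by
    rw [norm_sub_sq_eq_norm_sq_add_norm_sq_sub_two_mul_norm_mul_norm_mul_cos_angle, hx, hy]
    ring
  refine (mul_self_le_mul_self_iff (norm_nonneg _) (angle_nonneg x y)).mpr ?_
  nlinarith [Real.one_sub_sq_div_two_le_cos (x := angle x y)]

namespace ContinuousLinearMap

theorem reApplyInnerSelf_le_add_norm_sub (T : E →L[ℝ] E) {x y : E} (hx : ‖x‖ ≤ 1)
    (hy : ‖y‖ ≤ 1) : T.reApplyInnerSelf y ≤ T.reApplyInnerSelf x + 2 * ‖T‖ * ‖x - y‖ := by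
  have hsplit : T.reApplyInnerSelf y - T.reApplyInnerSelf x = ⟪T (y - x), y⟫ + ⟪T x, y - x⟫ := by
    simp only [reApplyInnerSelf_apply, RCLike.re_to_real, map_sub, inner_sub_left, inner_sub_right]
    ring
  have h1 : ⟪T (y - x), y⟫ ≤ ‖T‖ * ‖x - y‖ :=
    calc ⟪T (y - x), y⟫ ≤ ‖T (y - x)‖ * ‖y‖ := real_inner_le_norm _ _
      _ ≤ ‖T‖ * ‖y - x‖ * 1 := by gcongr; exact T.le_opNorm _
      _ = ‖T‖ * ‖x - y‖ := by rw [mul_one, norm_sub_rev]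
  have h2 : ⟪T x, y - x⟫ ≤ ‖T‖ * ‖x - y‖ :=
    calc ⟪T x, y - x⟫ ≤ ‖T x‖ * ‖y - x‖ := real_inner_le_norm _ _
      _ ≤ ‖T‖ * 1 * ‖y - x‖ := by gcongr; exact T.le_opNorm_of_le hx
      _ = ‖T‖ * ‖x - y‖ := by rw [mul_one, norm_sub_rev]
  linarith

theorem rayleighQuotient_le_add_angle (T : E →L[ℝ] E) {x y : E} (hx : x ≠ 0) (hy : y ≠ 0) :
    T.rayleighQuotient y ≤ T.rayleighQuotient x + 2 * angle x y * ‖T‖ := by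
  have hunit : ∀ {z : E}, z ≠ 0 → ‖‖z‖⁻¹ • z‖ = 1 := fun hz => norm_smul_inv_norm hz
  have hrq : ∀ {z : E}, z ≠ 0 → T.rayleighQuotient z = T.reApplyInnerSelf (‖z‖⁻¹ • z) := by
    intro z hz
    rw [← T.rayleigh_smul z (c := (‖z‖⁻¹ : ℝ)) (inv_ne_zero (norm_ne_zero_iff.mpr hz)),
      rayleighQuotient, hunit hz, one_pow, div_one]
  have hangle : angle (‖x‖⁻¹ • x) (‖y‖⁻¹ • y) = angle x y := by
    rw [angle_smul_left_of_pos _ _ (by positivity), angle_smul_right_of_pos _ _ (by positivity)]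
  have hquad := T.reApplyInnerSelf_le_add_norm_sub (hunit hx).le (hunit hy).le
  have hchord := norm_sub_le_angle (hunit hx) (hunit hy)
  rw [hrq hx, hrq hy, ← hangle]
  nlinarith [norm_nonneg T]

end ContinuousLinearMap

end InnerProductSpace

section EuclideanCoordinates

variable {n : ℕ}

theorem sqrt_dotProduct_self_eq_norm (v : Fin n → ℝ) :
    Real.sqrt (v ⬝ᵥ v) = ‖(WithLp.toLp 2 v : EuclideanSpace ℝ (Fin n))‖ := by
  rw [EuclideanSpace.norm_eq]
  simp [dotProduct, sq]

theorem vecAngle_nonneg (w v : Fin n → ℝ) : 0 ≤ vecAngle w v :=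
  Real.arccos_nonneg _

theorem vecAngle_eq_angle (w v : Fin n → ℝ) :
    vecAngle w v = angle (WithLp.toLp 2 w : EuclideanSpace ℝ (Fin n)) (WithLp.toLp 2 v) := by
  rw [vecAngle, angle, sqrt_dotProduct_self_eq_norm, sqrt_dotProduct_self_eq_norm,
    EuclideanSpace.inner_toLp_toLp, star_trivial, dotProduct_comm]

theorem dotProduct_mulVec_div_eq_rayleighQuotient (M : Matrix (Fin n) (Fin n) ℝ)
    (v : Fin n → ℝ) :
    (v ⬝ᵥ M *ᵥ v) / (v ⬝ᵥ v) =
      (LinearMap.toContinuousLinearMap (Matrix.toEuclideanLin M)).rayleighQuotient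
        (WithLp.toLp 2 v) := by
  rw [ContinuousLinearMap.rayleighQuotient, ContinuousLinearMap.reApplyInnerSelf_apply,
    ← real_inner_self_eq_norm_sq]
  rfl

theorem dotProduct_mulVec_div_le_add_vecAngle (M : Matrix (Fin n) (Fin n) ℝ) {w v : Fin n → ℝ}
    (hw : w ≠ 0) (hv : v ≠ 0) :
    (v ⬝ᵥ M *ᵥ v) / (v ⬝ᵥ v) ≤ (w ⬝ᵥ M *ᵥ w) / (w ⬝ᵥ w) + 2 * vecAngle w v * matOpNorm M := by
  simp only [dotProduct_mulVec_div_eq_rayleighQuotient, vecAngle_eq_angle, matOpNorm]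
  exact ContinuousLinearMap.rayleighQuotient_le_add_angle _ (by simpa using hw) (by simpa using hv)

end EuclideanCoordinates

section FiniteNet

variable {α : Type*} (f : α → ℝ) {D : Set α} {s : Finset α} (hs : s.Nonempty)

theorem iInf₂_coe_le_inf' (hsD : ↑s ⊆ D) : ⨅ w ∈ D, (f w : EReal) ≤ (s.inf' hs f : ℝ) := by
  obtain ⟨u, hu, hu_eq⟩ := s.exists_mem_eq_inf' hs f
  rw [hu_eq]
  exact iInf₂_le u (hsD hu)

theorem inf'_le_iInf₂_coe_add {c : ℝ} (h : ∀ w ∈ D, ∃ u ∈ s, f u ≤ f w + c) :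
    ((s.inf' hs f : ℝ) : EReal) ≤ (⨅ w ∈ D, (f w : EReal)) + c := by
  have hle : ((s.inf' hs f - c : ℝ) : EReal) ≤ ⨅ w ∈ D, (f w : EReal) := by
    refine le_iInf₂ fun w hw => EReal.coe_le_coe_iff.mpr ?_
    obtain ⟨u, hu, hfu⟩ := h w hw
    linarith [s.inf'_le f hu]
  calc ((s.inf' hs f : ℝ) : EReal) = ((s.inf' hs f - c : ℝ) : EReal) + c := by
        rw [← EReal.coe_add, sub_add_cancel]
    _ ≤ (⨅ w ∈ D, (f w : EReal)) + c := add_le_add_left hle _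

end FiniteNet

theorem exists_mem_vecAngle_le_sSup {n : ℕ} {D : Set (Fin n → ℝ)} {s : Finset (Fin n → ℝ)}
    (hs : s.Nonempty) {w : Fin n → ℝ} (hw : w ∈ D) :
    ∃ u ∈ s, vecAngle w u ≤ sSup {r : ℝ | ∃ w ∈ D, r = s.inf' hs fun v => vecAngle w v} := by
  obtain ⟨u, hu, hu_eq⟩ := s.exists_mem_eq_inf' hs (vecAngle w)
  refine ⟨u, hu, hu_eq ▸ le_csSup ⟨Real.pi, ?_⟩ ⟨w, hw, rfl⟩⟩
  rintro r ⟨w', -, rfl⟩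
  obtain ⟨v, hv⟩ := hs
  exact (s.inf'_le _ hv).trans (Real.arccos_le_pi _)

theorem directional_consistency_general {n : ℕ} (D : Set (Fin n → ℝ))
    (hzero : (0 : Fin n → ℝ) ∉ D)
    (DW : Finset (Fin n → ℝ)) (hDWne : DW.Nonempty) (hDWsub : ↑DW ⊆ D)
    (dθ : ℝ)
    (hdθ : dθ = sSup { r : ℝ | ∃ w ∈ D, r = DW.inf' hDWne (fun v => vecAngle w v) })
    (M : Matrix (Fin n) (Fin n) ℝ) :
    lamD D M ≤ ((DW.inf' hDWne (fun v => (v ⬝ᵥ M.mulVec v) / (v ⬝ᵥ v)) : ℝ) : EReal) ∧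
    ((DW.inf' hDWne (fun v => (v ⬝ᵥ M.mulVec v) / (v ⬝ᵥ v)) : ℝ) : EReal) ≤
      lamD D M + ((4 * dθ * matOpNorm M : ℝ) : EReal) := by
  have hnet : ∀ w ∈ D, ∃ u ∈ DW, vecAngle w u ≤ dθ := fun w hw =>
    hdθ ▸ exists_mem_vecAngle_le_sSup hDWne hw
  have hdθ_nonneg : 0 ≤ dθ := by
    obtain ⟨v, hv⟩ := hDWne
    obtain ⟨u, -, hu⟩ := hnet v (hDWsub hv)
    exact (vecAngle_nonneg v u).trans hu
  have hM_nonneg : 0 ≤ matOpNorm M := norm_nonneg _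
  refine ⟨iInf₂_coe_le_inf' _ hDWne hDWsub, inf'_le_iInf₂_coe_add _ hDWne fun w hw => ?_⟩
  obtain ⟨u, hu, hwu⟩ := hnet w hw
  refine ⟨u, hu, ?_⟩
  have hquot := dotProduct_mulVec_div_le_add_vecAngle M (ne_of_mem_of_not_mem hw hzero)
    (ne_of_mem_of_not_mem (hDWsub hu) hzero)
  have hslack : 2 * vecAngle w u * matOpNorm M ≤ 4 * dθ * matOpNorm M := by
    nlinarith [vecAngle_nonneg w u]
  linarith

/-- Consistency of directional minimization over a grid direction subset `D^W ⊆ D`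
with directional resolution `dθ < π/2`:
`λ_D(M) ≤ min_{v ∈ D^W} (vᵀMv)/|v|² ≤ λ_D(M) + 4 dθ ‖M‖`. -/
theorem directional_consistency {n : ℕ} (D : Set (Fin n → ℝ))
    (hspan : Submodule.span ℝ D = ⊤)
    (hsymm : ∀ d ∈ D, -d ∈ D)
    (hzero : (0 : Fin n → ℝ) ∉ D)
    (DW : Finset (Fin n → ℝ)) (hDWne : DW.Nonempty) (hDWsub : ↑DW ⊆ D)
    (dθ : ℝ)
    (hdθ : dθ = sSup { r : ℝ | ∃ w ∈ D, r = DW.inf' hDWne (fun v => vecAngle w v) })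
    (hdθlt : dθ < Real.pi / 2)
    (M : Matrix (Fin n) (Fin n) ℝ) (hM : M.IsSymm) :
    lamD D M ≤ ((DW.inf' hDWne (fun v => (v ⬝ᵥ M.mulVec v) / (v ⬝ᵥ v)) : ℝ) : EReal) ∧
    ((DW.inf' hDWne (fun v => (v ⬝ᵥ M.mulVec v) / (v ⬝ᵥ v)) : ℝ) : EReal) ≤
      lamD D M + ((4 * dθ * matOpNorm M : ℝ) : EReal) :=
  directional_consistency_general D hzero DW hDWne hDWsub dθ hdθ M
end
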